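/- arXiv:2103.14551 — 5 statements merged into one kernel-verified Lean document; each statement's English description precedes it below -/
import Mathlib

section
/- There exists a unique c* > 1 with the following property: f_{c*}(k) ≤ 0 for all k ∈ ℝ, and there exists k₀ > 0 with f_{c*}(k₀) = 0; moreover for any c > 1 with c ≠ c*, either f_c takes a positive value at some k > 0 (when c < c*) or f_c(k) < 0 for all k > 0 (when c > c*). -/
noncomputable def fdisp (c k : ℝ) : ℝ :=
  -c^2 * k^2 + 8 - 10 * Real.cos k + 2 * Real.cos (2*k)

noncomputable def gdisp (k : ℝ) : ℝ := 8 - 10 * Real.cos k + 2 * Real.cos (2*k)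

lemma fdisp_eq (c k : ℝ) : fdisp c k = -c^2 * k^2 + gdisp k := by
  unfold fdisp gdisp; ring

lemma gdisp_eq (k : ℝ) : gdisp k = 2 * (3 - 2 * Real.cos k) * (1 - Real.cos k) := by
  unfold gdisp; rw [Real.cos_two_mul]; ring

lemma gdisp_neg (k : ℝ) : gdisp (-k) = gdisp k := by
  unfold gdisp
  rw [Real.cos_neg, show (2 : ℝ) * -k = -(2*k) by ring, Real.cos_neg]

lemma gdisp_le_20 (k : ℝ) : gdisp k ≤ 20 := by
  rw [gdisp_eq]
  nlinarith [Real.neg_one_le_cos k, Real.cos_le_one k]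

lemma gdisp_small (k : ℝ) : gdisp k ≤ (1 + k^2) * k^2 := by
  rw [gdisp_eq]
  have h1 : 1 - k^2/2 ≤ Real.cos k := Real.one_sub_sq_div_two_le_cos
  have h2 : Real.cos k ≤ 1 := Real.cos_le_one k
  nlinarith

lemma gdisp_pi : gdisp Real.pi = 20 := by
  unfold gdisp
  rw [Real.cos_pi, Real.cos_two_pi]; ring

noncomputable def hfun (k : ℝ) : ℝ := gdisp k / k^2

theorem stmt_5 :
    ∃! cs : ℝ, 1 < cs ∧ (∀ k : ℝ, fdisp cs k ≤ 0) ∧ (∃ k₀ > 0, fdisp cs k₀ = 0) ∧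
      (∀ c : ℝ, 1 < c → c ≠ cs →
        (c < cs → ∃ k > 0, 0 < fdisp c k) ∧ (cs < c → ∀ k > 0, fdisp c k < 0)) := by
  -- maximize hfun on [1,4]
  have hcont : ContinuousOn hfun (Set.Icc (1:ℝ) 4) := by
    apply ContinuousOn.div
    · exact (Continuous.continuousOn (by unfold gdisp; continuity))
    · exact (continuous_pow 2).continuousOn
    · intro x hx
      have : (1:ℝ) ≤ x := hx.1
      positivity
  obtain ⟨k₀, hk₀mem, hk₀max⟩ :=
    isCompact_Icc.exists_isMaxOn (Set.nonempty_Icc.mpr (by norm_num)) hcont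
  set M : ℝ := hfun k₀ with hM
  have hk₀1 : (1:ℝ) ≤ k₀ := hk₀mem.1
  have hk₀4 : k₀ ≤ 4 := hk₀mem.2
  have hk₀pos : (0:ℝ) < k₀ := by linarith
  -- M > 2 via k = π
  have hpi_mem : Real.pi ∈ Set.Icc (1:ℝ) 4 :=
    ⟨by linarith [Real.pi_gt_three], Real.pi_le_four⟩
  have hpisq : Real.pi^2 < 10 := by
    nlinarith [Real.pi_lt_d2, Real.pi_pos]
  have hMgt2 : 2 < M := by
    have h1 : hfun Real.pi ≤ M := hk₀max hpi_mem
    have h2 : 2 < hfun Real.pi := by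
      rw [hfun, gdisp_pi]
      rw [lt_div_iff₀ (by positivity)]
      nlinarith
    linarith
  have hMpos : 0 < M := by linarith
  -- key bound : g k ≤ M k² for k > 0
  have key : ∀ k : ℝ, 0 < k → gdisp k ≤ M * k^2 := by
    intro k hk
    rcases le_total k 1 with h1 | h1
    · have h2 := gdisp_small k
      have h3 : (0:ℝ) ≤ (1 - k^2) * k^2 :=
        mul_nonneg (by nlinarith) (sq_nonneg k)
      have h4 : (0:ℝ) ≤ (M - 2) * k^2 :=
        mul_nonneg (by linarith) (sq_nonneg k)
      nlinarith
    · rcases le_total k 4 with h4 | h4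
      · have hmax := hk₀max (⟨h1, h4⟩ : k ∈ Set.Icc (1:ℝ) 4)
        have : gdisp k / k^2 ≤ M := hmax
        calc gdisp k = gdisp k / k^2 * k^2 := by field_simp
          _ ≤ M * k^2 := by nlinarith [sq_nonneg k]
      · have := gdisp_le_20 k
        nlinarith
  have hgk₀ : gdisp k₀ = M * k₀^2 := by
    rw [hM, hfun]; field_simp
  set cs : ℝ := Real.sqrt M with hcs
  have hcssq : cs^2 = M := Real.sq_sqrt hMpos.le
  have hcs1 : 1 < cs := by
    rw [show (1:ℝ) = Real.sqrt 1 by simp]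
    exact Real.sqrt_lt_sqrt (by norm_num) (by linarith)
  have hcspos : 0 < cs := by linarith
  refine ⟨cs, ⟨hcs1, ?_, ⟨k₀, hk₀pos, ?_⟩, ?_⟩, ?_⟩
  · -- ∀ k, fdisp cs k ≤ 0
    intro k
    rcases lt_trichotomy k 0 with hk | hk | hk
    · have h := key (-k) (by linarith)
      rw [gdisp_neg] at h
      rw [fdisp_eq]
      nlinarith
    · subst hk
      norm_num [fdisp]
    · have h := key k hk
      rw [fdisp_eq]
      nlinarith
  · rw [fdisp_eq, hgk₀, hcssq]; ring
  · intro c hc hne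
    constructor
    · intro hlt
      refine ⟨k₀, hk₀pos, ?_⟩
      have hc2 : c^2 < M := by
        calc c^2 < cs^2 := by nlinarith
          _ = M := hcssq
      rw [fdisp_eq, hgk₀]
      nlinarith [mul_lt_mul_of_pos_right hc2 (pow_pos hk₀pos 2)]
    · intro hlt k hk
      have hc2 : M < c^2 := by
        calc M = cs^2 := hcssq.symm
          _ < c^2 := by nlinarith
      have h := key k hk
      rw [fdisp_eq]
      nlinarith [mul_lt_mul_of_pos_right hc2 (pow_pos hk 2)]
  · -- uniqueness
    rintro y ⟨hy1, hyle, ⟨ky, hkypos, hkyzero⟩, hy4⟩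
    by_contra hne
    rcases lt_or_gt_of_ne hne with h | h
    · -- y < cs : apply y's clause to c = cs
      have := ((hy4 cs hcs1 (Ne.symm hne)).2 h) k₀ hk₀pos
      have hz : fdisp cs k₀ = 0 := by rw [fdisp_eq, hgk₀, hcssq]; ring
      rw [hz] at this; exact lt_irrefl 0 this
    · -- cs < y : fdisp y ky < 0 but = 0
      have h1 : M < y^2 := by
        calc M = cs^2 := hcssq.symm
          _ < y^2 := by nlinarith
      have h2 := key ky hkypos
      have h3 : fdisp y ky < 0 := by
        rw [fdisp_eq]
        nlinarith [mul_lt_mul_of_pos_right h1 (pow_pos hkypos 2)]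
      rw [hkyzero] at h3; exact lt_irrefl 0 h3
end

section
/- Let c* > 1 be such that f_{c*}(k) ≤ 0 for all k and f_{c*}(k₀) = 0 for some k₀ > 0. Then any such k₀ satisfies 0 < k₀ < π. -/
/-!
Write `f_c(k) = 𝑓̃(k) - c²k²` with `𝑓̃(k) = 8 - 10 cos k + 2 cos 2k`, which is symmetric about `π`.
If `π < k₀`, the reflected point `2π - k₀` is closer to `0` than `k₀`, so
`f_c(2π - k₀) = 𝑓̃(k₀) - c²(2π - k₀)² > f_c(k₀) = 0`. If `k₀ = π`, then `π` is a maximum of `f_c`,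
but `𝑓̃'(π) = 0` by the symmetry, so `f_c'(π) = -2c²π ≠ 0`.
-/

lemma deriv_eq_zero_of_forall_two_mul_sub {g : ℝ → ℝ} {c : ℝ} (hsym : ∀ x, g (2 * c - x) = g x) :
    deriv g c = 0 := by
  have h : deriv g c = -deriv g c := by
    conv_lhs => rw [← funext hsym]
    rw [deriv_comp_const_sub]
    ring_nf
  linarith

section Reflection

variable {g : ℝ → ℝ} {a c k₀ : ℝ}

lemma le_of_forall_two_mul_sub (ha : 0 < a) (hc : 0 < c) (hsym : ∀ x, g (2 * c - x) = g x)
    (hle : ∀ k, g k ≤ a * k ^ 2) (hroot : g k₀ = a * k₀ ^ 2) : k₀ ≤ c := by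
  by_contra! hck₀
  have hcloser : (2 * c - k₀) ^ 2 < k₀ ^ 2 := by nlinarith
  have := hle (2 * c - k₀)
  rw [hsym] at this
  nlinarith

lemma ne_of_forall_two_mul_sub (ha : 0 < a) (hc : 0 < c) (hsym : ∀ x, g (2 * c - x) = g x)
    (hg : DifferentiableAt ℝ g c) (hle : ∀ k, g k ≤ a * k ^ 2) (hroot : g k₀ = a * k₀ ^ 2) :
    k₀ ≠ c := by
  rintro rfl
  have hmin : IsLocalMin (fun k => a * k ^ 2 - g k) k₀ :=
    Filter.Eventually.of_forall fun k => by linarith [hle k]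
  have hderiv : HasDerivAt (fun k => a * k ^ 2 - g k) (a * (2 * k₀) - 0) k₀ := by
    rw [← deriv_eq_zero_of_forall_two_mul_sub hsym]
    simpa using ((hasDerivAt_pow 2 k₀).const_mul a).fun_sub hg.hasDerivAt
  have := hmin.hasDerivAt_eq_zero hderiv
  have : 0 < a * (2 * k₀) := by positivity
  linarith

lemma lt_of_forall_two_mul_sub (ha : 0 < a) (hc : 0 < c) (hsym : ∀ x, g (2 * c - x) = g x)
    (hg : DifferentiableAt ℝ g c) (hle : ∀ k, g k ≤ a * k ^ 2) (hroot : g k₀ = a * k₀ ^ 2) :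
    k₀ < c :=
  (le_of_forall_two_mul_sub ha hc hsym hle hroot).lt_of_ne
    (ne_of_forall_two_mul_sub ha hc hsym hg hle hroot)

end Reflection

open Real in
theorem stmt_6_general (cs k₀ : ℝ) (hcs : 1 < cs)
    (hle : ∀ k : ℝ, -cs^2 * k^2 + 8 - 10 * Real.cos k + 2 * Real.cos (2*k) ≤ 0)
    (hroot : -cs^2 * k₀^2 + 8 - 10 * Real.cos k₀ + 2 * Real.cos (2*k₀) = 0) :
    k₀ < π := by
  set g : ℝ → ℝ := fun k => 8 - 10 * cos k + 2 * cos (2 * k)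
  have hsym : ∀ x, g (2 * π - x) = g x := fun x => by
    have h : 2 * (2 * π - x) = ((2 : ℕ) : ℝ) * (2 * π) - 2 * x := by push_cast; ring
    simp only [g, h, cos_two_pi_sub, cos_nat_mul_two_pi_sub]
  refine lt_of_forall_two_mul_sub (a := cs ^ 2) (by positivity) pi_pos hsym (by fun_prop)
    (fun k => ?_) ?_
  · linarith [hle k]
  · linarith

open Real in
theorem stmt_6 (cs k₀ : ℝ) (hcs : 1 < cs)
    (hle : ∀ k : ℝ, -cs^2 * k^2 + 8 - 10 * Real.cos k + 2 * Real.cos (2*k) ≤ 0)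
    (hk₀ : 0 < k₀)
    (hroot : -cs^2 * k₀^2 + 8 - 10 * Real.cos k₀ + 2 * Real.cos (2*k₀) = 0) :
    k₀ < π :=
  stmt_6_general cs k₀ hcs hle hroot
end

section
/- Let c* > 1 and k₀ ∈ (0,π) be such that f_{c*} ≤ 0 on ℝ and f_{c*}(k₀) = 0 (so k₀ is a double root and a local maximum). Then f_{c*}''(k₀) < 0, i.e. the double root at k₀ is non-degenerate. -/
/-!
Since `f_c ≤ 0 = f_c k₀`, the point `k₀` is a global maximum, so `f_c'(k₀) = 0` and the
cubic Taylor expansion of `f_c` at `k₀` (whose remainder is `O(t⁴)` uniformly) shows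
`f_c''(k₀) ≤ 0`, and `f_c'''(k₀) = 0` in case of equality. But `f_c''(k₀) = f_c'''(k₀) = 0` forces
`cos k₀ = 5/16` (as `sin k₀ > 0`) and `c² = 153/32`, and then `f_c(k₀) = 0` is incompatible with
`1 - k₀²/2 ≤ cos k₀`.
-/

open Real Filter Topology

lemma nonpos_of_forall_le_mul_pow {a M δ : ℝ} {n : ℕ} (hn : n ≠ 0) (hδ : 0 < δ)
    (h : ∀ t, 0 < t → t < δ → a ≤ M * t ^ n) : a ≤ 0 := by
  have hlim : Tendsto (fun t : ℝ => M * t ^ n) (𝓝[>] 0) (𝓝 0) := by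
    have : Tendsto (fun t : ℝ => M * t ^ n) (𝓝 0) (𝓝 (M * 0 ^ n)) :=
      (continuous_const.mul (continuous_pow n)).tendsto 0
    rw [zero_pow hn, mul_zero] at this
    exact this.mono_left nhdsWithin_le_nhds
  refine ge_of_tendsto hlim ?_
  filter_upwards [Ioo_mem_nhdsGT hδ] with t ht using h t ht.1 ht.2

lemma nonpos_and_eq_zero_of_forall_quadratic_add_cubic_le {b c M δ : ℝ} (hδ : 0 < δ)
    (h : ∀ t, |t| ≤ δ → b * t ^ 2 + c * t ^ 3 ≤ M * t ^ 4) : b ≤ 0 ∧ (b = 0 → c = 0) := by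
  have h₂ : ∀ t, 0 < t → t < δ → b * t ^ 2 + c * t ^ 3 ≤ M * t ^ 4 ∧
      b * t ^ 2 - c * t ^ 3 ≤ M * t ^ 4 := fun t ht htδ => by
    have hp := h t (by rw [abs_of_pos ht]; exact htδ.le)
    have hm := h (-t) (by rw [abs_neg, abs_of_pos ht]; exact htδ.le)
    constructor <;> nlinarith
  refine ⟨nonpos_of_forall_le_mul_pow (M := M) two_ne_zero hδ fun t ht htδ => ?_, fun hb => ?_⟩
  · obtain ⟨hp, hm⟩ := h₂ t ht htδ
    have : 0 < t ^ 2 := by positivity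
    nlinarith
  · refine abs_nonpos_iff.mp
      (nonpos_of_forall_le_mul_pow (M := M) one_ne_zero hδ fun t ht htδ => ?_)
    obtain ⟨hp, hm⟩ := h₂ t ht htδ
    have : 0 < t ^ 3 := by positivity
    rw [hb, pow_one] at *
    rcases abs_cases c with ⟨hc, -⟩ | ⟨hc, -⟩ <;> rw [hc] <;> nlinarith

lemma abs_cos_add_sub_taylor_le (a t : ℝ) (ht : |t| ≤ 1) :
    |cos (a + t) - (cos a - sin a * t - cos a * t ^ 2 / 2 + sin a * t ^ 3 / 6)|
      ≤ 5 / 48 * t ^ 4 := by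
  have ht4 : |t| ^ 4 = t ^ 4 := by rw [pow_abs]; exact abs_of_nonneg (by positivity)
  have ht5 : |t| ^ 5 ≤ |t| ^ 4 := pow_le_pow_of_le_one (abs_nonneg t) ht (by norm_num)
  have hcos := abs_le.mp (cos_bound ht)
  have hsin := abs_le.mp (sin_bound ht)
  have hca := abs_le.mp (abs_cos_le_one a)
  have hsa := abs_le.mp (abs_sin_le_one a)
  rw [cos_add]
  refine abs_le.mpr ⟨?_, ?_⟩ <;> nlinarith

noncomputable def fc (c k : ℝ) : ℝ := -c ^ 2 * k ^ 2 + 8 - 10 * cos k + 2 * cos (2 * k)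

lemma hasDerivAt_fc (c x : ℝ) :
    HasDerivAt (fc c) (-2 * c ^ 2 * x + 10 * sin x - 4 * sin (2 * x)) x := by
  have h := ((((hasDerivAt_pow 2 x).const_mul (-c ^ 2)).add_const 8).sub
    ((hasDerivAt_cos x).const_mul 10)).add
    (((hasDerivAt_cos (2 * x)).comp x ((hasDerivAt_id x).const_mul 2)).const_mul 2)
  exact h.congr_deriv (by norm_num; ring)

lemma deriv_fc (c : ℝ) : deriv (fc c) = fun x => -2 * c ^ 2 * x + 10 * sin x - 4 * sin (2 * x) :=
  funext fun x => (hasDerivAt_fc c x).deriv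

lemma iteratedDeriv_two_fc (c x : ℝ) :
    iteratedDeriv 2 (fc c) x = -2 * c ^ 2 + 10 * cos x - 8 * cos (2 * x) := by
  rw [iteratedDeriv_succ, iteratedDeriv_one, deriv_fc]
  have h := (((hasDerivAt_id x).const_mul (-2 * c ^ 2)).add
    ((hasDerivAt_sin x).const_mul 10)).sub
    (((hasDerivAt_sin (2 * x)).comp x ((hasDerivAt_id x).const_mul 2)).const_mul 4)
  exact (h.congr_deriv (by ring)).deriv

lemma abs_fc_add_sub_taylor_le (c a t : ℝ) (ht : |t| ≤ 1 / 2) :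
    |fc c (a + t) - (fc c a + (-2 * c ^ 2 * a + 10 * sin a - 4 * sin (2 * a)) * t
      + (-2 * c ^ 2 + 10 * cos a - 8 * cos (2 * a)) * t ^ 2 / 2
      + (-10 * sin a + 16 * sin (2 * a)) * t ^ 3 / 6)| ≤ 5 * t ^ 4 := by
  have h₁ := abs_le.mp (abs_cos_add_sub_taylor_le a t (by linarith))
  have h₂ := abs_le.mp (abs_cos_add_sub_taylor_le (2 * a) (2 * t)
    (by rw [abs_mul, abs_two]; linarith))
  have ht4 : 0 ≤ t ^ 4 := by positivity
  unfold fc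
  rw [show 2 * (a + t) = 2 * a + 2 * t by ring]
  refine abs_le.mpr ⟨?_, ?_⟩ <;> linarith

lemma fc_deriv_two_nonpos_and_deriv_three_eq_zero_of_forall_le {c a : ℝ}
    (hmax : ∀ k, fc c k ≤ fc c a) :
    -2 * c ^ 2 + 10 * cos a - 8 * cos (2 * a) ≤ 0 ∧
      (-2 * c ^ 2 + 10 * cos a - 8 * cos (2 * a) = 0 → -10 * sin a + 16 * sin (2 * a) = 0) := by
  have hcrit : -2 * c ^ 2 * a + 10 * sin a - 4 * sin (2 * a) = 0 :=
    IsLocalMax.hasDerivAt_eq_zero (Eventually.of_forall hmax) (hasDerivAt_fc c a)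
  obtain ⟨hQ, hR⟩ := nonpos_and_eq_zero_of_forall_quadratic_add_cubic_le (M := 5)
    (b := (-2 * c ^ 2 + 10 * cos a - 8 * cos (2 * a)) / 2)
    (c := (-10 * sin a + 16 * sin (2 * a)) / 6) one_half_pos fun t ht => by
      have htaylor := (abs_le.mp (abs_fc_add_sub_taylor_le c a t ht)).1
      rw [hcrit] at htaylor
      linarith [hmax (a + t)]
  exact ⟨by linarith, fun h => by linarith [hR (by linarith)]⟩

lemma fc_ne_zero_of_deriv_two_eq_zero_of_deriv_three_eq_zero {c k : ℝ} (hk : k ∈ Set.Ioo 0 π)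
    (hQ : -2 * c ^ 2 + 10 * cos k - 8 * cos (2 * k) = 0)
    (hR : -10 * sin k + 16 * sin (2 * k) = 0) : fc c k ≠ 0 := by
  have hsin : 0 < sin k := sin_pos_of_pos_of_lt_pi hk.1 hk.2
  have hcos : cos k = 5 / 16 := by
    rw [sin_two_mul] at hR
    have : sin k * (32 * cos k - 10) = 0 := by linarith
    linarith [(mul_eq_zero.mp this).resolve_left hsin.ne']
  have hcos2 : cos (2 * k) = -103 / 128 := by rw [cos_two_mul, hcos]; norm_num
  have hc : c ^ 2 = 153 / 32 := by rw [hcos, hcos2] at hQ; linarith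
  have hk2 : 11 / 8 ≤ k ^ 2 := by linarith [one_sub_sq_div_two_le_cos (x := k)]
  unfold fc
  rw [hc, hcos, hcos2]
  -- `fc c k = 0` would now need `k ^ 2 = 209/306 < 11/8`
  nlinarith

open Real in
theorem stmt_7_general (cs k₀ : ℝ) (hk₀ : k₀ ∈ Set.Ioo 0 π)
    (hle : ∀ k : ℝ, -cs^2 * k^2 + 8 - 10 * Real.cos k + 2 * Real.cos (2*k) ≤ 0)
    (hroot : -cs^2 * k₀^2 + 8 - 10 * Real.cos k₀ + 2 * Real.cos (2*k₀) = 0) :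
    iteratedDeriv 2 (fun k => -cs^2 * k^2 + 8 - 10 * Real.cos k + 2 * Real.cos (2*k)) k₀ < 0 := by
  change iteratedDeriv 2 (fc cs) k₀ < 0
  have hmax : ∀ k, fc cs k ≤ fc cs k₀ := fun k => (hle k).trans_eq hroot.symm
  obtain ⟨hQ, hR⟩ := fc_deriv_two_nonpos_and_deriv_three_eq_zero_of_forall_le hmax
  rw [iteratedDeriv_two_fc]
  exact hQ.lt_of_ne fun hQ0 =>
    fc_ne_zero_of_deriv_two_eq_zero_of_deriv_three_eq_zero hk₀ hQ0 (hR hQ0) hroot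

open Real in
theorem stmt_7 (cs k₀ : ℝ) (hcs : 1 < cs) (hk₀ : k₀ ∈ Set.Ioo 0 π)
    (hle : ∀ k : ℝ, -cs^2 * k^2 + 8 - 10 * Real.cos k + 2 * Real.cos (2*k) ≤ 0)
    (hroot : -cs^2 * k₀^2 + 8 - 10 * Real.cos k₀ + 2 * Real.cos (2*k₀) = 0) :
    iteratedDeriv 2 (fun k => -cs^2 * k^2 + 8 - 10 * Real.cos k + 2 * Real.cos (2*k)) k₀ < 0 :=
  stmt_7_general cs k₀ hk₀ hle hroot
end

section
/- Suppose g : ℝ → ℝ is smooth, even, g(0) = 0, g'(0) = 0, g''(0) < 0, g has a local maximum with value 0 at some k₀ ∈ (0,π), and g'' has at most two zeros in (0,π). Then k₀ is the unique local maximum of g in (0,π), and the only zeros of g in [0,π] are 0 and k₀. -/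
open Real Set in
/-- At most two zeros of `deriv (deriv g)` in `(0,π)` forbids four critical points of `g`
in `[0,π]`. -/
private lemma stmt8_rolle4 (g : ℝ → ℝ) (hc : Continuous (deriv g))
    (z₁ z₂ : ℝ) (hz : ∀ k ∈ Set.Ioo 0 π, deriv (deriv g) k = 0 → k = z₁ ∨ k = z₂)
    {a b c d : ℝ} (h0a : 0 ≤ a) (hab : a < b) (hbc : b < c) (hcd : c < d) (hdπ : d ≤ π)
    (ha : deriv g a = 0) (hb : deriv g b = 0) (hc' : deriv g c = 0) (hd' : deriv g d = 0) :
    False := by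
  obtain ⟨x, hx, hx0⟩ := exists_deriv_eq_zero hab hc.continuousOn (ha.trans hb.symm)
  obtain ⟨y, hy, hy0⟩ := exists_deriv_eq_zero hbc hc.continuousOn (hb.trans hc'.symm)
  obtain ⟨w, hw, hw0⟩ := exists_deriv_eq_zero hcd hc.continuousOn (hc'.trans hd'.symm)
  have hxm : x ∈ Set.Ioo 0 π := ⟨lt_of_le_of_lt h0a hx.1, by linarith [hx.2, hy.1, hy.2, hw.1, hw.2]⟩
  have hym : y ∈ Set.Ioo 0 π := ⟨by linarith [hx.1, hx.2, hy.1], by linarith [hy.2, hw.1, hw.2]⟩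
  have hwm : w ∈ Set.Ioo 0 π := ⟨by linarith [hx.1, hx.2, hy.1, hy.2, hw.1], lt_of_lt_of_le hw.2 hdπ⟩
  have hxy : x < y := lt_trans hx.2 hy.1
  have hyw : y < w := lt_trans hy.2 hw.1
  rcases hz x hxm hx0 with rfl | rfl <;> rcases hz y hym hy0 with rfl | rfl <;>
    rcases hz w hwm hw0 with h | h <;> linarith

open Real in
theorem stmt_8 (g : ℝ → ℝ) (hg : ContDiff ℝ (⊤ : ℕ∞) g) (heven : ∀ k, g (-k) = g k)
    (h0 : g 0 = 0) (h0' : deriv g 0 = 0) (h0'' : iteratedDeriv 2 g 0 < 0)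
    (k₀ : ℝ) (hk₀ : k₀ ∈ Set.Ioo 0 π) (hmax : IsLocalMax g k₀) (hgk₀ : g k₀ = 0)
    (hzeros : ∃ z₁ z₂ : ℝ, ∀ k ∈ Set.Ioo 0 π, iteratedDeriv 2 g k = 0 → k = z₁ ∨ k = z₂) :
    (∀ k ∈ Set.Ioo 0 π, IsLocalMax g k → k = k₀) ∧
      (∀ k ∈ Set.Icc 0 π, g k = 0 → k = 0 ∨ k = k₀) := by
  obtain ⟨z₁, z₂, hz⟩ := hzeros
  have hit2 : iteratedDeriv 2 g = deriv (deriv g) := by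
    rw [show (2:ℕ) = 1 + 1 from rfl, iteratedDeriv_succ, iteratedDeriv_one]
  rw [hit2] at h0'' hz
  -- basic differentiability facts
  have hgT : ContDiff ℝ (↑(⊤:ℕ∞)) g := hg.of_le (by simp)
  have hgd : Differentiable ℝ g := (contDiff_infty_iff_deriv.mp hgT).1
  have hg1 : ContDiff ℝ (↑(⊤:ℕ∞)) (deriv g) := (contDiff_infty_iff_deriv.mp hgT).2
  have hg1d : Differentiable ℝ (deriv g) := (contDiff_infty_iff_deriv.mp hg1).1
  have hg2 : Continuous (deriv (deriv g)) :=
    ((contDiff_infty_iff_deriv.mp hg1).2).continuous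
  have hgc : Continuous g := hgd.continuous
  have hg1c : Continuous (deriv g) := hg1d.continuous
  have hπ : (0:ℝ) < π := Real.pi_pos
  -- there is a point near 0 where g is negative
  have hneg : ∀ ε > 0, ∃ δ, 0 < δ ∧ δ < ε ∧ g δ < 0 := by
    intro ε hε
    -- deriv (deriv g) < 0 on a neighborhood of 0
    have hcont : ContinuousAt (deriv (deriv g)) 0 := hg2.continuousAt
    have hev : ∀ᶠ x in nhds (0:ℝ), deriv (deriv g) x < 0 :=
      hcont.eventually_lt continuousAt_const h0''
    obtain ⟨η, hη, hball⟩ := Metric.eventually_nhds_iff.mp hev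
    set δ := min (η/2) (ε/2) with hδdef
    have hδpos : 0 < δ := lt_min (by linarith) (by linarith)
    have hδη : δ < η := lt_of_le_of_lt (min_le_left _ _) (by linarith)
    have h1 : StrictAntiOn (deriv g) (Set.Icc 0 δ) := by
      apply strictAntiOn_of_deriv_neg (convex_Icc 0 δ) hg1c.continuousOn
      intro x hx
      rw [interior_Icc] at hx
      apply hball
      rw [Real.dist_eq, sub_zero, abs_of_nonneg (le_of_lt hx.1)]
      linarith [hx.2]
    have hg'neg : ∀ x ∈ Set.Ioc 0 δ, deriv g x < 0 := by
      intro x hx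
      have := h1 ⟨le_refl 0, le_of_lt hδpos⟩ ⟨le_of_lt hx.1, hx.2⟩ hx.1
      rwa [h0'] at this
    have h2 : StrictAntiOn g (Set.Icc 0 δ) := by
      apply strictAntiOn_of_deriv_neg (convex_Icc 0 δ) hgc.continuousOn
      intro x hx
      rw [interior_Icc] at hx
      exact hg'neg x ⟨hx.1, le_of_lt hx.2⟩
    refine ⟨δ, hδpos, lt_of_le_of_lt (min_le_right _ _) (by linarith), ?_⟩
    have := h2 ⟨le_refl 0, le_of_lt hδpos⟩ ⟨le_of_lt hδpos, le_refl δ⟩ hδpos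
    rwa [h0] at this
  -- interior minimum between two zeros with a negative point in between
  have hmin : ∀ u v : ℝ, u < v → g u = 0 → g v = 0 → (∃ p ∈ Set.Ioo u v, g p < 0) →
      ∃ m ∈ Set.Ioo u v, deriv g m = 0 ∧ g m < 0 ∧ ∀ x ∈ Set.Icc u v, g m ≤ g x := by
    intro u v huv hu hv ⟨p, hp, hpneg⟩
    obtain ⟨m, hm, hmmin⟩ := (isCompact_Icc (a := u) (b := v)).exists_isMinOn
      (Set.nonempty_Icc.2 (le_of_lt huv)) hgc.continuousOn
    have hmneg : g m < 0 := lt_of_le_of_lt (hmmin ⟨le_of_lt hp.1, le_of_lt hp.2⟩) hpneg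
    have hmo : m ∈ Set.Ioo u v := by
      rcases hm.1.lt_or_eq with h | h
      · rcases hm.2.lt_or_eq with h' | h'
        · exact ⟨h, h'⟩
        · exact absurd (h' ▸ hmneg) (by rw [hv]; exact lt_irrefl 0)
      · exact absurd hmneg (by rw [← h, hu]; exact lt_irrefl 0)
    have : IsLocalMin g m := hmmin.isLocalMin (Icc_mem_nhds hmo.1 hmo.2)
    exact ⟨m, hmo, this.deriv_eq_zero, hmneg, fun x hx => hmmin hx⟩
  -- the canonical interior minimum m ∈ (0, k₀)
  obtain ⟨δ, hδ0, hδk, hδneg⟩ := hneg k₀ hk₀.1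
  obtain ⟨m, hmo, hm', hmneg, hmmin⟩ := hmin 0 k₀ hk₀.1 h0 hgk₀ ⟨δ, ⟨hδ0, hδk⟩, hδneg⟩
  have hk₀' : deriv g k₀ = 0 := hmax.deriv_eq_zero
  constructor
  · -- uniqueness of the local max
    intro k hk hkmax
    by_contra hne
    have hk' : deriv g k = 0 := hkmax.deriv_eq_zero
    rcases lt_trichotomy k m with h1 | h1 | h1
    · exact stmt8_rolle4 g hg1c z₁ z₂ hz (le_refl 0) hk.1 h1 hmo.2 (le_of_lt hk₀.2)
        h0' hk' hm' hk₀'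
    · -- k = m : g is locally constant near m, contradiction
      subst h1
      have hconst : ∀ᶠ x in nhds k, g x = g k := by
        filter_upwards [hkmax, Icc_mem_nhds hmo.1 hmo.2] with x hx1 hx2
        exact le_antisymm hx1 (hmmin x hx2)
      obtain ⟨η, hη, hball⟩ := Metric.eventually_nhds_iff.mp hconst
      set I := Set.Ioo (k - η) (k + η) with hI
      have hIo : IsOpen I := isOpen_Ioo
      have hmem : ∀ x ∈ I, g x = g k := by
        intro x hx
        exact hball (by rw [Real.dist_eq]; rw [abs_lt]; constructor <;> [linarith [hx.1]; linarith [hx.2]])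
      have hd1 : ∀ x ∈ I, deriv g x = 0 := by
        intro x hx
        have : g =ᶠ[nhds x] fun _ => g k :=
          Filter.eventuallyEq_of_mem (hIo.mem_nhds hx) hmem
        rw [this.deriv_eq, deriv_const]
      have hd2 : ∀ x ∈ I, deriv (deriv g) x = 0 := by
        intro x hx
        have : deriv g =ᶠ[nhds x] fun _ => (0:ℝ) :=
          Filter.eventuallyEq_of_mem (hIo.mem_nhds hx) hd1
        rw [this.deriv_eq, deriv_const]
      -- three distinct points of I inside (0, π)
      set η' := min η (min k (π - k)) with hη'
      have hη'pos : 0 < η' := lt_min hη (lt_min hmo.1 (by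
        have := lt_trans hmo.2 hk₀.2; linarith))
      have hpt : ∀ t : ℝ, |t| < η' → (k + t ∈ I ∧ k + t ∈ Set.Ioo 0 π) := by
        intro t ht
        have h1 := abs_lt.mp ht
        have h2 : η' ≤ η := min_le_left _ _
        have h3 : η' ≤ k := le_trans (min_le_right _ _) (min_le_left _ _)
        have h4 : η' ≤ π - k := le_trans (min_le_right _ _) (min_le_right _ _)
        exact ⟨⟨by linarith, by linarith⟩, ⟨by linarith, by linarith⟩⟩
      have p1 := hpt (-(η'/2)) (by rw [abs_neg, abs_of_nonneg (by linarith)]; linarith)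
      have p2 := hpt 0 (by rw [abs_zero]; linarith)
      have p3 := hpt (η'/2) (by rw [abs_of_nonneg (by linarith)]; linarith)
      have := hz _ p1.2 (hd2 _ p1.1)
      have := hz _ p2.2 (hd2 _ p2.1)
      have := hz _ p3.2 (hd2 _ p3.1)
      rcases this with h | h <;> rcases ‹k + 0 = z₁ ∨ k + 0 = z₂› with h' | h' <;>
        rcases ‹k + -(η'/2) = z₁ ∨ k + -(η'/2) = z₂› with h'' | h'' <;> linarith
    · rcases lt_trichotomy k k₀ with h2 | h2 | h2
      · exact stmt8_rolle4 g hg1c z₁ z₂ hz (le_refl 0) hmo.1 h1 h2 (le_of_lt hk₀.2)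
          h0' hm' hk' hk₀'
      · exact hne h2
      · exact stmt8_rolle4 g hg1c z₁ z₂ hz (le_refl 0) hmo.1 hmo.2 h2 (le_of_lt hk.2)
          h0' hm' hk₀' hk'
  · -- zeros of g
    intro k hk hgk
    rcases eq_or_lt_of_le hk.1 with h1 | h1
    · exact Or.inl h1.symm
    rcases lt_trichotomy k k₀ with h2 | h2 | h2
    · -- k ∈ (0, k₀): find a min in (0,k) and a Rolle point in (k, k₀)
      obtain ⟨δ', hδ'0, hδ'k, hδ'neg⟩ := hneg k h1
      obtain ⟨m₁, hm₁o, hm₁', _, _⟩ := hmin 0 k h1 h0 hgk ⟨δ', ⟨hδ'0, hδ'k⟩, hδ'neg⟩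
      obtain ⟨c, hc, hc0⟩ := exists_deriv_eq_zero h2 hgc.continuousOn (hgk.trans hgk₀.symm)
      exact absurd (stmt8_rolle4 g hg1c z₁ z₂ hz (le_refl 0) hm₁o.1
        (lt_trans hm₁o.2 hc.1) hc.2 (le_of_lt hk₀.2) h0' hm₁' hc0 hk₀') id
    · exact Or.inr h2
    · -- k ∈ (k₀, π]: Rolle between k₀ and k
      obtain ⟨c, hc, hc0⟩ := exists_deriv_eq_zero h2 hgc.continuousOn (hgk₀.trans hgk.symm)
      exact absurd (stmt8_rolle4 g hg1c z₁ z₂ hz (le_refl 0) hmo.1 hmo.2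
        hc.1 (le_of_lt (lt_of_lt_of_le hc.2 hk.2)) h0' hm' hk₀' hc0) id
end

section
/- Let f : ℝ → ℝ be bounded with |f(ξ)| ≤ C̃₁ e^{−C̃₂|ξ|} for all ξ, and let p : ℝ → ℝ. Suppose |p| ≤ Kε² for small ε > 0. Then there exists C > 0 (depending only on C̃₁, C̃₂, K) such that sup_{ξ∈ℝ} |f(εξ)(e^{ipξ} − 1)| ≤ C ε |log ε| for all sufficiently small ε ∈ (0,1). -/
/-! Split `ℝ` at `|ξ| ≍ |log ε| / ε`. For small `|ξ|`,
`|e^{ipξ} - 1| ≤ |p| |ξ| ≤ K ε² |ξ| ≲ ε |log ε|` while `f` stays bounded. For large `|ξ|`,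
`|e^{ipξ} - 1| ≤ 2` and the exponential decay of `f` at `εξ` beyond `2 |log ε| / C₂` already
gives a factor `ε²`. -/

open Real

lemma Complex.norm_exp_I_mul_ofReal_sub_one_le_two (θ : ℝ) :
    ‖Complex.exp (Complex.I * θ) - 1‖ ≤ 2 := by
  calc ‖Complex.exp (Complex.I * θ) - 1‖
      ≤ ‖Complex.exp (Complex.I * θ)‖ + ‖(1 : ℂ)‖ := norm_sub_le _ _
    _ = 2 := by rw [Complex.norm_exp_I_mul_ofReal, norm_one]; norm_num

lemma Real.le_abs_log_of_le_half {ε : ℝ} (hε : 0 < ε) (hε_half : ε ≤ 1 / 2) : ε ≤ |log ε| :=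
  calc ε ≤ 1 - ε := by linarith
    _ ≤ -log ε := by linarith [log_le_sub_one_of_pos hε]
    _ ≤ |log ε| := neg_le_abs _

lemma Real.exp_neg_le_sq_of_two_mul_abs_log_le {ε t : ℝ} (hε : 0 < ε) (ht : 2 * |log ε| ≤ t) :
    exp (-t) ≤ ε ^ 2 :=
  calc exp (-t) ≤ exp (2 * log ε) := exp_le_exp.2 (by linarith [neg_abs_le (log ε)])
    _ = ε ^ 2 := by rw [← exp_log (pow_pos hε 2), log_pow]; norm_num

section ExponentialDecay

variable {f : ℝ → ℝ} {C₁ C₂ : ℝ}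

lemma abs_le_of_abs_le_mul_exp_neg_mul_abs (hC₁ : 0 ≤ C₁) (hC₂ : 0 ≤ C₂)
    (hf : ∀ ξ, |f ξ| ≤ C₁ * exp (-C₂ * |ξ|)) (x : ℝ) : |f x| ≤ C₁ :=
  calc |f x| ≤ C₁ * exp (-C₂ * |x|) := hf x
    _ ≤ C₁ * 1 := by gcongr; exact exp_le_one_iff.2 (by nlinarith [abs_nonneg x])
    _ = C₁ := mul_one C₁

lemma abs_le_mul_sq_of_abs_le_mul_exp_neg_mul_abs (hC₁ : 0 ≤ C₁)
    (hf : ∀ ξ, |f ξ| ≤ C₁ * exp (-C₂ * |ξ|)) {ε x : ℝ} (hε : 0 < ε)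
    (hx : 2 * |log ε| ≤ C₂ * |x|) : |f x| ≤ C₁ * ε ^ 2 :=
  calc |f x| ≤ C₁ * exp (-(C₂ * |x|)) := by rw [← neg_mul]; exact hf x
    _ ≤ C₁ * ε ^ 2 := by gcongr; exact exp_neg_le_sq_of_two_mul_abs_log_le hε hx

lemma norm_mul_exp_I_mul_sub_one_le {K : ℝ} (hC₁ : 0 ≤ C₁) (hC₂ : 0 < C₂) (hK : 0 ≤ K)
    (hf : ∀ ξ, |f ξ| ≤ C₁ * exp (-C₂ * |ξ|)) {ε p : ℝ} (hε : 0 < ε) (hε_log : ε ≤ |log ε|)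
    (hp : |p| ≤ K * ε ^ 2) (ξ : ℝ) :
    ‖(f (ε * ξ) : ℂ) * (Complex.exp (Complex.I * (p * ξ : ℝ)) - 1)‖ ≤
      2 * C₁ * (K / C₂ + 1) * ε * |log ε| := by
  set L := |log ε|
  have hεL : 0 ≤ ε * L := by positivity
  rw [norm_mul, Complex.norm_real, Real.norm_eq_abs]
  rcases le_or_gt (C₂ * |ε * ξ|) (2 * L) with h_inner | h_outer
  · have h_phase : |p * ξ| ≤ 2 * (K / C₂) * ε * L := by
      rw [abs_mul, abs_of_pos hε] at h_inner
      rw [abs_mul]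
      have hξ : ε * |ξ| ≤ 2 * L / C₂ := by rw [le_div_iff₀ hC₂]; linarith
      calc |p| * |ξ| ≤ K * ε ^ 2 * |ξ| := by gcongr
        _ = K * ε * (ε * |ξ|) := by ring
        _ ≤ K * ε * (2 * L / C₂) := by gcongr
        _ = 2 * (K / C₂) * ε * L := by ring
    calc |f (ε * ξ)| * ‖Complex.exp (Complex.I * (p * ξ : ℝ)) - 1‖
        ≤ C₁ * (2 * (K / C₂) * ε * L) := by
          gcongr
          · exact abs_le_of_abs_le_mul_exp_neg_mul_abs hC₁ hC₂.le hf _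
          · exact norm_exp_I_mul_ofReal_sub_one_le.trans (by rwa [Real.norm_eq_abs])
      _ ≤ 2 * C₁ * (K / C₂ + 1) * ε * L := by nlinarith [mul_nonneg hC₁ hεL]
  · calc |f (ε * ξ)| * ‖Complex.exp (Complex.I * (p * ξ : ℝ)) - 1‖
        ≤ C₁ * ε ^ 2 * 2 := by
          gcongr
          · exact abs_le_mul_sq_of_abs_le_mul_exp_neg_mul_abs hC₁ hf hε h_outer.le
          · exact Complex.norm_exp_I_mul_ofReal_sub_one_le_two _
      _ ≤ 2 * C₁ * 1 * ε * L := by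
          nlinarith [mul_le_mul_of_nonneg_left hε_log (mul_nonneg hC₁ hε.le)]
      _ ≤ 2 * C₁ * (K / C₂ + 1) * ε * L := by gcongr; linarith [div_nonneg hK hC₂.le]

end ExponentialDecay

theorem stmt_15 (f : ℝ → ℝ) (C₁ C₂ K : ℝ) (hC₁ : 0 < C₁) (hC₂ : 0 < C₂) (hK : 0 < K)
    (hf : ∀ ξ : ℝ, |f ξ| ≤ C₁ * Real.exp (-C₂ * |ξ|)) :
    ∃ C > 0, ∃ ε₀ ∈ Set.Ioo (0:ℝ) 1, ∀ ε : ℝ, 0 < ε → ε < ε₀ →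
      ∀ p : ℝ, |p| ≤ K * ε^2 → ∀ ξ : ℝ,
        ‖(f (ε * ξ) : ℂ) * (Complex.exp (Complex.I * (p * ξ : ℝ)) - 1)‖ ≤
          C * ε * |Real.log ε| := by
  refine ⟨2 * C₁ * (K / C₂ + 1), by positivity, 1 / 2, by norm_num, ?_⟩
  intro ε hε hε₀ p hp ξ
  exact norm_mul_exp_I_mul_sub_one_le hC₁.le hC₂ hK.le hf hε
    (le_abs_log_of_le_half hε hε₀.le) hp ξ
end
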